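/- arXiv:1803.00139 — 3 statements merged into one kernel-verified Lean document; each statement's English description precedes it below -/
import Mathlib

section
/- Let a_{kj}, b_k (k,j = 1,…,r) be real numbers satisfying b_k b_j − b_k a_{kj} − b_j a_{jk} = 0 for all k,j. Let S be a symmetric bilinear form on R^n. If vectors Z_k, Y_k, z⁰, z¹ ∈ R^n and τ > 0 satisfy Z_k = z⁰ + τ Σ_j a_{kj} Y_j and z¹ = z⁰ + τ Σ_k b_k Y_k, then S(z¹, z¹) − S(z⁰, z⁰) = 2τ Σ_k b_k S(Z_k, Y_k). -/
/-! With `w = ∑ k, b k • Y k` the step reads `z1 = z0 + τ • w`, so the left-hand side is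
`2τ S(z0, w) + τ² S(w, w)`, while the stage relations turn the right-hand side into
`2τ S(z0, w) + 2τ² ∑ₖ b k S(∑ⱼ a k j • Y j, Y k)`. The symplecticity condition splits each
coefficient `b k b j` of `S(w, w)` as `b k a k j + b j a j k`; by symmetry of `S` the two
halves contribute equally, which matches the `τ²` terms. -/

open Finset

namespace LinearMap.BilinForm

variable {R M ι : Type*} [CommRing R] [AddCommGroup M] [Module R M] [Fintype ι]
  {B : LinearMap.BilinForm R M}

theorem IsSymm.apply_add_self (hB : B.IsSymm) (x y : M) :
    B (x + y) (x + y) = B x x + 2 * B x y + B y y := by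
  simp only [map_add, LinearMap.add_apply, hB.eq y x]
  ring

theorem apply_sum_smul_sum_smul (b c : ι → R) (X Y : ι → M) :
    B (∑ k, b k • X k) (∑ j, c j • Y j) = ∑ k, ∑ j, b k * c j * B (X k) (Y j) := by
  simp only [map_sum, map_smul, LinearMap.sum_apply, LinearMap.smul_apply, smul_eq_mul, mul_sum]
  exact sum_comm.trans (sum_congr rfl fun _ _ => sum_congr rfl fun _ _ => by ring)

theorem IsSymm.apply_sum_smul_self_of_symplectic (hB : B.IsSymm) (a : ι → ι → R) (b : ι → R)
    (hab : ∀ k j, b k * b j - b k * a k j - b j * a j k = 0) (Y : ι → M) :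
    B (∑ k, b k • Y k) (∑ k, b k • Y k) = 2 * ∑ k, b k * B (∑ j, a k j • Y j) (Y k) := by
  set T := ∑ k, ∑ j, b k * a k j * B (Y j) (Y k)
  have stage_sum : ∑ k, b k * B (∑ j, a k j • Y j) (Y k) = T := by
    simp only [map_sum, map_smul, LinearMap.sum_apply, LinearMap.smul_apply, smul_eq_mul,
      mul_sum, T, mul_assoc]
  have transposed_sum : ∑ k, ∑ j, b j * a j k * B (Y k) (Y j) = T := sum_comm
  calc B (∑ k, b k • Y k) (∑ k, b k • Y k)
      = ∑ k, ∑ j, b k * b j * B (Y k) (Y j) := apply_sum_smul_sum_smul b b Y Y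
    _ = ∑ k, ∑ j, (b k * a k j * B (Y j) (Y k) + b j * a j k * B (Y k) (Y j)) := by
        refine sum_congr rfl fun k _ => sum_congr rfl fun j _ => ?_
        rw [hB.eq (Y j)]
        linear_combination B (Y k) (Y j) * hab k j
    _ = 2 * ∑ k, b k * B (∑ j, a k j • Y j) (Y k) := by
        simp only [sum_add_distrib, transposed_sum, stage_sum]
        ring

end LinearMap.BilinForm

theorem rk_symplectic_quadratic_identity_general {n r : ℕ}
    (S : (Fin n → ℝ) →ₗ[ℝ] (Fin n → ℝ) →ₗ[ℝ] ℝ)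
    (hS : ∀ u v, S u v = S v u)
    (a : Fin r → Fin r → ℝ) (b : Fin r → ℝ)
    (hab : ∀ k j, b k * b j - b k * a k j - b j * a j k = 0)
    (Z Y : Fin r → (Fin n → ℝ)) (z0 z1 : Fin n → ℝ) (τ : ℝ)
    (hZ : ∀ k, Z k = z0 + τ • ∑ j, a k j • Y j)
    (hz1 : z1 = z0 + τ • ∑ k, b k • Y k) :
    S z1 z1 - S z0 z0 = 2 * τ * ∑ k, b k * S (Z k) (Y k) := by
  have hS' : LinearMap.BilinForm.IsSymm S := ⟨hS⟩
  have stage_sum : ∑ k, b k * S (Z k) (Y k)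
      = S z0 (∑ k, b k • Y k) + τ * ∑ k, b k * S (∑ j, a k j • Y j) (Y k) := by
    simp only [hZ, map_add, map_smul, map_sum, LinearMap.add_apply, LinearMap.smul_apply,
      smul_eq_mul, mul_add, sum_add_distrib, mul_sum, mul_left_comm τ]
  rw [stage_sum, hz1, hS'.apply_add_self]
  simp only [map_smul, LinearMap.smul_apply, smul_eq_mul,
    hS'.apply_sum_smul_self_of_symplectic a b hab Y]
  ring

theorem rk_symplectic_quadratic_identity {n r : ℕ}
    (S : (Fin n → ℝ) →ₗ[ℝ] (Fin n → ℝ) →ₗ[ℝ] ℝ)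
    (hS : ∀ u v, S u v = S v u)
    (a : Fin r → Fin r → ℝ) (b : Fin r → ℝ)
    (hab : ∀ k j, b k * b j - b k * a k j - b j * a j k = 0)
    (Z Y : Fin r → (Fin n → ℝ)) (z0 z1 : Fin n → ℝ) (τ : ℝ) (hτ : 0 < τ)
    (hZ : ∀ k, Z k = z0 + τ • ∑ j, a k j • Y j)
    (hz1 : z1 = z0 + τ • ∑ k, b k • Y k) :
    S z1 z1 - S z0 z0 = 2 * τ * ∑ k, b k * S (Z k) (Y k) :=
  rk_symplectic_quadratic_identity_general S hS a b hab Z Y z0 z1 τ hZ hz1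
end

section
/- Let a_{kj}, b_k satisfy the symplecticity condition b_k b_j − b_k a_{kj} − b_j a_{jk} = 0 for all k,j = 1,…,r, and let K be a skew-symmetric n×n real matrix. Suppose dz_k, dY_k, dz⁰, dz¹ ∈ R^n satisfy dz_k = dz⁰ + τ Σ_j a_{kj} dY_j and dz¹ = dz⁰ + τ Σ_k b_k dY_k. Then ω(dz¹, dz¹') − ω(dz⁰, dz⁰') for two solutions of these relations satisfies: (dz¹)ᵀ K (dz¹)' = (dz⁰)ᵀ K (dz⁰)' + τ Σ_k b_k [ (dz_k)ᵀ K (dY_k)' + (dY_k)ᵀ K (dz_k)' ], where primed quantities satisfy the same recurrences. -/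
/-! Expand both sides by bilinearity. The terms linear in `τ` agree on the nose; the `τ²` terms
agree because the symplecticity condition `b k * b j = b k * a k j + b j * a j k` splits the double
sum `∑ k j, b k b j B(Y k, Y' j)` into the two internal-stage contributions. -/

open Matrix Finset

namespace LinearMap

variable {R M N P ι : Type*} [CommSemiring R] [AddCommMonoid M] [AddCommMonoid N]
  [AddCommMonoid P] [Module R M] [Module R N] [Module R P] [Fintype ι]
  (B : M →ₗ[R] N →ₗ[R] P)

theorem map_sum_smul_sum_smul (c d : ι → R) (Y : ι → M) (Y' : ι → N) :
    B (∑ k, c k • Y k) (∑ j, d j • Y' j) = ∑ k, ∑ j, (c k * d j) • B (Y k) (Y' j) := by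
  simp only [map_sum, map_smul, sum_apply, smul_apply, smul_sum, smul_smul, mul_comm]
  exact sum_comm

theorem map_sum_smul_sum_smul_of_symplectic {a : ι → ι → R} {b : ι → R}
    (hab : ∀ k j, b k * b j = b k * a k j + b j * a j k) (Y : ι → M) (Y' : ι → N) :
    B (∑ k, b k • Y k) (∑ j, b j • Y' j) =
      ∑ k, b k • (B (∑ j, a k j • Y j) (Y' k) + B (Y k) (∑ j, a k j • Y' j)) := by
  rw [map_sum_smul_sum_smul]
  simp only [hab, add_smul, sum_add_distrib, smul_add, map_sum, map_smul, sum_apply, smul_apply,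
    smul_sum, smul_smul]
  rw [add_comm, sum_comm (f := fun k j => (b j * a j k) • B (Y k) (Y' j))]

theorem map_add_smul_sum_smul_of_symplectic {a : ι → ι → R} {b : ι → R}
    (hab : ∀ k j, b k * b j = b k * a k j + b j * a j k) (τ : R)
    (z₀ : M) (Y : ι → M) (z₀' : N) (Y' : ι → N) :
    B (z₀ + τ • ∑ k, b k • Y k) (z₀' + τ • ∑ k, b k • Y' k) =
      B z₀ z₀' + τ • ∑ k, b k • (B (z₀ + τ • ∑ j, a k j • Y j) (Y' k) +
        B (Y k) (z₀' + τ • ∑ j, a k j • Y' j)) := by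
  simp only [map_add, map_smul, add_apply, smul_apply, map_sum_smul_sum_smul_of_symplectic B hab]
  simp only [map_sum, map_smul, sum_apply, smul_apply, smul_add, smul_sum, sum_add_distrib,
    smul_smul, mul_left_comm τ]
  abel

end LinearMap

theorem rk_multisymplectic_step_general {n r : ℕ}
    (K : Matrix (Fin n) (Fin n) ℝ)
    (a : Fin r → Fin r → ℝ) (b : Fin r → ℝ)
    (hab : ∀ k j, b k * b j - b k * a k j - b j * a j k = 0)
    (τ : ℝ)
    (dz dY dz' dY' : Fin r → (Fin n → ℝ)) (dz0 dz1 dz0' dz1' : Fin n → ℝ)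
    (hdz : ∀ k, dz k = dz0 + τ • ∑ j, a k j • dY j)
    (hdz1 : dz1 = dz0 + τ • ∑ k, b k • dY k)
    (hdz' : ∀ k, dz' k = dz0' + τ • ∑ j, a k j • dY' j)
    (hdz1' : dz1' = dz0' + τ • ∑ k, b k • dY' k) :
    dz1 ⬝ᵥ K.mulVec dz1' =
      dz0 ⬝ᵥ K.mulVec dz0' +
        τ * ∑ k, b k * (dz k ⬝ᵥ K.mulVec (dY' k) + dY k ⬝ᵥ K.mulVec (dz' k)) := by
  have hab' : ∀ k j, b k * b j = b k * a k j + b j * a j k := fun k j => by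
    linear_combination hab k j
  have step := (toLinearMap₂' ℝ K).map_add_smul_sum_smul_of_symplectic hab' τ dz0 dY dz0' dY'
  simp only [toLinearMap₂'_apply', smul_eq_mul] at step
  simpa only [hdz1, hdz1', hdz, hdz'] using step

theorem rk_multisymplectic_step {n r : ℕ}
    (K : Matrix (Fin n) (Fin n) ℝ) (hK : Kᵀ = -K)
    (a : Fin r → Fin r → ℝ) (b : Fin r → ℝ)
    (hab : ∀ k j, b k * b j - b k * a k j - b j * a j k = 0)
    (τ : ℝ)
    (dz dY dz' dY' : Fin r → (Fin n → ℝ)) (dz0 dz1 dz0' dz1' : Fin n → ℝ)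
    (hdz : ∀ k, dz k = dz0 + τ • ∑ j, a k j • dY j)
    (hdz1 : dz1 = dz0 + τ • ∑ k, b k • dY k)
    (hdz' : ∀ k, dz' k = dz0' + τ • ∑ j, a k j • dY' j)
    (hdz1' : dz1' = dz0' + τ • ∑ k, b k • dY' k) :
    dz1 ⬝ᵥ K.mulVec dz1' =
      dz0 ⬝ᵥ K.mulVec dz0' +
        τ * ∑ k, b k * (dz k ⬝ᵥ K.mulVec (dY' k) + dY k ⬝ᵥ K.mulVec (dz' k)) :=
  rk_multisymplectic_step_general K a b hab τ dz dY dz' dY' dz0 dz1 dz0' dz1' hdz hdz1 hdz' hdz1'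
end

section
/- Let a_{kj}, b_k (k,j = 1,…,r) be real RK coefficients with b_k b_j − b_k a_{kj} − b_j a_{jk} = 0, let K be an invertible skew-symmetric n×n real matrix, and let A, B be symmetric n×n real matrices such that K⁻¹A and K⁻¹B are skew-symmetric. Suppose z⁰, z¹, Z_k ∈ R^n and τ > 0, ΔW ∈ ℝ satisfy Z_k = z⁰ + Σ_j a_{kj} (τ K⁻¹A Z_j + ΔW K⁻¹B Z_j) and z¹ = z⁰ + Σ_k b_k (τ K⁻¹A Z_k + ΔW K⁻¹B Z_k). Then |z¹|² = |z⁰|². -/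
/-!
Write `L = τ K⁻¹A + ΔW K⁻¹B`, which is skew-symmetric, and `Y_k = L Z_k`, so that the scheme
is an ordinary Runge–Kutta step `Z_k = z⁰ + Σ_j a_{kj} Y_j`, `z¹ = z⁰ + Σ_k b_k Y_k`.
Skew-symmetry gives `⟨Z_k, Y_k⟩ = 0`, hence `⟨z⁰, Y_k⟩ = -Σ_j a_{kj} ⟨Y_j, Y_k⟩`. Expanding
`⟨z¹, z¹⟩` with this, the increment is `Σ_{k,j} (b_k b_j - b_k a_{kj} - b_j a_{jk}) ⟨Y_k, Y_j⟩`,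
which vanishes by the symplecticity condition on the coefficients (Cooper's argument).
-/

open Matrix Finset

section RungeKutta

variable {R M ι : Type*} [CommRing R] [AddCommGroup M] [Module R M] [Fintype ι]

theorem LinearMap.BilinForm.IsSymm.apply_self_eq_of_rk_step {Q : LinearMap.BilinForm R M}
    (hQ : Q.IsSymm) (a : ι → ι → R) (b : ι → R) (hab : ∀ k j, b k * b j - b k * a k j - b j * a j k = 0)
    {z₀ z₁ : M} {Z Y : ι → M} (hZ : ∀ k, Z k = z₀ + ∑ j, a k j • Y j)
    (hz₁ : z₁ = z₀ + ∑ k, b k • Y k) (hY : ∀ k, Q (Z k) (Y k) = 0) :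
    Q z₁ z₁ = Q z₀ z₀ := by
  have hz₀Y : ∀ k, Q z₀ (Y k) = -∑ j, a k j * Q (Y j) (Y k) := by
    intro k
    have h := hY k
    simp only [hZ k, map_add₂, map_sum₂, map_smul₂, smul_eq_mul] at h
    linear_combination h
  have hswap : ∑ k, ∑ j, b j * a j k * Q (Y j) (Y k) = ∑ k, ∑ j, b k * a k j * Q (Y j) (Y k) := by
    rw [sum_comm]
    exact sum_congr rfl fun k _ => sum_congr rfl fun j _ => by rw [hQ.eq]
  calc Q z₁ z₁
      = Q z₀ z₀ + ∑ k, b k * (2 * Q z₀ (Y k) + ∑ j, b j * Q (Y j) (Y k)) := by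
        simp only [hz₁, map_add, map_sum, map_smul, LinearMap.add_apply, LinearMap.sum_apply,
          LinearMap.smul_apply, smul_eq_mul, hQ.eq _ z₀, two_mul, mul_add, sum_add_distrib]
        ring
    _ = Q z₀ z₀ + ∑ k, ∑ j, (b k * b j - 2 * (b k * a k j)) * Q (Y j) (Y k) := by
        congr 1
        refine sum_congr rfl fun k _ => ?_
        rw [hz₀Y, mul_neg, mul_sum, ← sum_neg_distrib, ← sum_add_distrib, mul_sum]
        exact sum_congr rfl fun j _ => by ring
    _ = Q z₀ z₀ + ∑ k, ∑ j, (b k * b j - b k * a k j - b j * a j k) * Q (Y j) (Y k) := by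
        simp only [sub_mul, two_mul, add_mul, sum_sub_distrib, sum_add_distrib, hswap]
        ring
    _ = Q z₀ z₀ := by simp only [hab, zero_mul, sum_const_zero, add_zero]

end RungeKutta

theorem isSymm_dotProductBilin {m R : Type*} [Fintype m] [CommSemiring R] :
    LinearMap.BilinForm.IsSymm (dotProductBilin R R : LinearMap.BilinForm R (m → R)) :=
  ⟨dotProduct_comm⟩

theorem Matrix.dotProduct_mulVec_self_eq_zero_of_transpose_eq_neg {m R : Type*} [Fintype m]
    [CommRing R] [IsAddTorsionFree R] {L : Matrix m m R} (hL : Lᵀ = -L) (v : m → R) :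
    v ⬝ᵥ L *ᵥ v = 0 := by
  refine self_eq_neg.mp ?_
  calc v ⬝ᵥ L *ᵥ v = Lᵀ *ᵥ v ⬝ᵥ v := by rw [dotProduct_mulVec, mulVec_transpose]
    _ = -(v ⬝ᵥ L *ᵥ v) := by rw [hL, neg_mulVec, neg_dotProduct, dotProduct_comm]

theorem stochastic_rk_norm_preservation_general {n r : ℕ}
    (K A B : Matrix (Fin n) (Fin n) ℝ)
    (hKA : (K⁻¹ * A)ᵀ = -(K⁻¹ * A)) (hKB : (K⁻¹ * B)ᵀ = -(K⁻¹ * B))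
    (a : Fin r → Fin r → ℝ) (b : Fin r → ℝ)
    (hab : ∀ k j, b k * b j - b k * a k j - b j * a j k = 0)
    (τ ΔW : ℝ)
    (z0 z1 : Fin n → ℝ) (Z : Fin r → (Fin n → ℝ))
    (hZ : ∀ k, Z k = z0 + ∑ j, a k j •
      (τ • (K⁻¹ * A).mulVec (Z j) + ΔW • (K⁻¹ * B).mulVec (Z j)))
    (hz1 : z1 = z0 + ∑ k, b k •
      (τ • (K⁻¹ * A).mulVec (Z k) + ΔW • (K⁻¹ * B).mulVec (Z k))) :
    z1 ⬝ᵥ z1 = z0 ⬝ᵥ z0 := by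
  set L := τ • (K⁻¹ * A) + ΔW • (K⁻¹ * B)
  have hL : Lᵀ = -L := by
    rw [transpose_add, transpose_smul, transpose_smul, hKA, hKB, smul_neg, smul_neg, neg_add]
  have hLv : ∀ v, τ • (K⁻¹ * A) *ᵥ v + ΔW • (K⁻¹ * B) *ᵥ v = L *ᵥ v := fun v => by
    rw [add_mulVec, smul_mulVec, smul_mulVec]
  simp only [hLv] at hZ hz1
  exact LinearMap.BilinForm.IsSymm.apply_self_eq_of_rk_step isSymm_dotProductBilin a b hab hZ hz1
    fun k => dotProduct_mulVec_self_eq_zero_of_transpose_eq_neg hL (Z k)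

theorem stochastic_rk_norm_preservation {n r : ℕ}
    (K A B : Matrix (Fin n) (Fin n) ℝ)
    (hK : Kᵀ = -K) (hKinv : IsUnit K.det)
    (hA : Aᵀ = A) (hB : Bᵀ = B)
    (hKA : (K⁻¹ * A)ᵀ = -(K⁻¹ * A)) (hKB : (K⁻¹ * B)ᵀ = -(K⁻¹ * B))
    (a : Fin r → Fin r → ℝ) (b : Fin r → ℝ)
    (hab : ∀ k j, b k * b j - b k * a k j - b j * a j k = 0)
    (τ ΔW : ℝ) (hτ : 0 < τ)
    (z0 z1 : Fin n → ℝ) (Z : Fin r → (Fin n → ℝ))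
    (hZ : ∀ k, Z k = z0 + ∑ j, a k j •
      (τ • (K⁻¹ * A).mulVec (Z j) + ΔW • (K⁻¹ * B).mulVec (Z j)))
    (hz1 : z1 = z0 + ∑ k, b k •
      (τ • (K⁻¹ * A).mulVec (Z k) + ΔW • (K⁻¹ * B).mulVec (Z k))) :
    z1 ⬝ᵥ z1 = z0 ⬝ᵥ z0 :=
  stochastic_rk_norm_preservation_general K A B hKA hKB a b hab τ ΔW z0 z1 Z hZ hz1
end
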